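/- arXiv:0811.0400 — 6 statements merged into one kernel-verified Lean document; each statement's English description precedes it below -/
import Mathlib

section
/- Let K be a field of characteristic zero, A a commutative associative unital K-algebra, σ : A → A a K-algebra endomorphism, and ∂ : A → A a σ-derivation. For a ∈ A let a·∂ denote the K-linear operator on A sending c to a·∂(c). Then for all a, b ∈ A one has the equality of K-linear operators on A: (σ(a)·∂) ∘ (b·∂) − (σ(b)·∂) ∘ (a·∂) = (σ(a)·∂(b) − σ(b)·∂(a))·∂. -/
theorem stmt0_general {K A : Type*} [Field K] [CommRing A] [Algebra K A]
    (σ : A →ₐ[K] A) (D : A →ₗ[K] A)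
    (hD : ∀ a b : A, D (a * b) = D a * b + σ a * D b)
    (a b : A) :
    (σ a • D) ∘ₗ (b • D) - (σ b • D) ∘ₗ (a • D)
      = (σ a * D b - σ b * D a) • D := by
  ext c
  simp only [LinearMap.sub_apply, LinearMap.comp_apply, LinearMap.smul_apply, smul_eq_mul, hD]
  -- the second-order terms `σ a * σ b * D (D c)` cancel because `A` is commutative
  ring

/-- For a σ-derivation ∂ on a commutative associative unital K-algebra A,
the twisted bracket of the operators a·∂ and b·∂ satisfies
(σ(a)·∂) ∘ (b·∂) − (σ(b)·∂) ∘ (a·∂) = (σ(a)·∂(b) − σ(b)·∂(a))·∂. -/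
theorem stmt0 {K A : Type*} [Field K] [CharZero K] [CommRing A] [Algebra K A]
    (σ : A →ₐ[K] A) (D : A →ₗ[K] A)
    (hD : ∀ a b : A, D (a * b) = D a * b + σ a * D b)
    (a b : A) :
    (σ a • D) ∘ₗ (b • D) - (σ b • D) ∘ₗ (a • D)
      = (σ a * D b - σ b * D a) • D :=
  stmt0_general σ D hD a b
end

section
/- Let K be a field of characteristic zero, A a commutative associative unital K-algebra, σ : A → A a K-algebra endomorphism, ∂ : A → A a σ-derivation, and δ ∈ A an element such that ∂(σ(a)) = δ·σ(∂(a)) for all a ∈ A. Define ⟨a,b⟩ := σ(a)·∂(b) − σ(b)·∂(a) ∈ A for a, b ∈ A. Then the six-term twisted Jacobi identity holds as an identity of K-linear operators on A: the cyclic sum over (a,b,c) of ( ⟨σ(a), ⟨b,c⟩⟩ + δ·⟨a, ⟨b,c⟩⟩ )·∂ equals zero; explicitly, ( ⟨σ(a),⟨b,c⟩⟩ + δ⟨a,⟨b,c⟩⟩ + ⟨σ(b),⟨c,a⟩⟩ + δ⟨b,⟨c,a⟩⟩ + ⟨σ(c),⟨a,b⟩⟩ + δ⟨c,⟨a,b⟩⟩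 )·∂ = 0 for all a, b, c ∈ A. -/
/-!
Commutativity of `A` makes the σ-twist invisible in the bracket: comparing the Leibniz rule
for `D (u * v)` and `D (v * u)` gives `σ u * D v - σ v * D u = u * D v - v * D u`, so
`⟨u, v⟩ = u ∂v - v ∂u`. Expanding the six terms with the Leibniz rule and `∂ ∘ σ = δ · σ ∘ ∂`,
everything cancels cyclically except the `δ`-terms containing `σ b · ∂²c`, which the same
identity applied to the pairs `(b, ∂c)` turns into cyclically cancelling terms as well.
-/

/-- The bracket ⟨a,b⟩ := σ(a)·∂(b) − σ(b)·∂(a). -/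
def twBr {K A : Type*} [Field K] [CommRing A] [Algebra K A]
    (σ : A →ₐ[K] A) (D : A →ₗ[K] A) (a b : A) : A :=
  σ a * D b - σ b * D a

section TwistedDerivation

variable {K A : Type*} [Field K] [CommRing A] [Algebra K A]
  {σ : A →ₐ[K] A} {D : A →ₗ[K] A}

theorem map_mul_sub_map_mul_eq (hD : ∀ a b : A, D (a * b) = D a * b + σ a * D b) (u v : A) :
    σ u * D v - σ v * D u = u * D v - v * D u := by
  have h := hD v u
  rw [mul_comm v u] at h
  linear_combination h - hD u v

theorem twBr_eq (hD : ∀ a b : A, D (a * b) = D a * b + σ a * D b) (u v : A) :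
    twBr σ D u v = u * D v - v * D u :=
  map_mul_sub_map_mul_eq hD u v

theorem twBr_cyclic_sum_eq_zero (hD : ∀ a b : A, D (a * b) = D a * b + σ a * D b)
    {δ : A} (hδ : ∀ a : A, D (σ a) = δ * σ (D a)) (a b c : A) :
    twBr σ D (σ a) (twBr σ D b c) + δ * twBr σ D a (twBr σ D b c)
      + twBr σ D (σ b) (twBr σ D c a) + δ * twBr σ D b (twBr σ D c a)
      + twBr σ D (σ c) (twBr σ D a b) + δ * twBr σ D c (twBr σ D a b) = 0 := by
  have h := map_mul_sub_map_mul_eq hD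
  simp only [twBr_eq hD, map_sub, hD, hδ]
  linear_combination δ * a * (h b (D c) - h c (D b)) + δ * b * (h c (D a) - h a (D c))
    + δ * c * (h a (D b) - h b (D a))

end TwistedDerivation

theorem stmt1_general {K A : Type*} [Field K] [CommRing A] [Algebra K A]
    (σ : A →ₐ[K] A) (D : A →ₗ[K] A)
    (hD : ∀ a b : A, D (a * b) = D a * b + σ a * D b)
    (δ : A) (hδ : ∀ a : A, D (σ a) = δ * σ (D a))
    (a b c : A) :
    ((twBr σ D (σ a) (twBr σ D b c) + δ * twBr σ D a (twBr σ D b c)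
      + twBr σ D (σ b) (twBr σ D c a) + δ * twBr σ D b (twBr σ D c a)
      + twBr σ D (σ c) (twBr σ D a b) + δ * twBr σ D c (twBr σ D a b)) • D
      : A →ₗ[K] A) = 0 := by
  rw [twBr_cyclic_sum_eq_zero hD hδ, zero_smul]

/-- the six-term twisted Jacobi identity for the twisted bracket of
σ-derivation operators, as an identity of K-linear operators on A. -/
theorem stmt1 {K A : Type*} [Field K] [CharZero K] [CommRing A] [Algebra K A]
    (σ : A →ₐ[K] A) (D : A →ₗ[K] A)
    (hD : ∀ a b : A, D (a * b) = D a * b + σ a * D b)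
    (δ : A) (hδ : ∀ a : A, D (σ a) = δ * σ (D a))
    (a b c : A) :
    ((twBr σ D (σ a) (twBr σ D b c) + δ * twBr σ D a (twBr σ D b c)
      + twBr σ D (σ b) (twBr σ D c a) + δ * twBr σ D b (twBr σ D c a)
      + twBr σ D (σ c) (twBr σ D a b) + δ * twBr σ D c (twBr σ D a b)) • D
      : A →ₗ[K] A) = 0 :=
  stmt1_general σ D hD δ hδ a b c
end

section
/- Let (V, ·, α) be a Hom-associative algebra over a field K. For n ≥ 1 and x₀, x₁, …, xₙ ∈ V, define the left-nested product Lₙ recursively by L₁(x₀,x₁) = x₀·x₁ and Lₙ(x₀,…,xₙ) = α^{n−1}(x₀) · Lₙ₋₁(x₁,…,xₙ), and the right-nested product Rₙ recursively by R₁(x₀,x₁) = x₀·x₁ and Rₙ(x₀,…,xₙ) = Rₙ₋₁(x₀,…,xₙ₋₁) · α^{n−1}(xₙ). Then for all n ≥ 2 and all x₀,…,xₙ ∈ V: Lₙ(x₀,…,xₙ) = Rₙ(x₀,…,xₙ); that is, α^{n−1}(x₀)·(α^{n−2}(x₁)·(α^{n−3}(x₂)·⋯·(α(x_{n−2})·(x_{n−1}·xₙ))⋯))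 = ((⋯((x₀·x₁)·α(x₂))⋯·α^{n−3}(x_{n−2}))·α^{n−2}(x_{n−1}))·α^{n−1}(xₙ). -/
/-- Left-nested product: `Lnest mul α n x` is
α^{n-1}(x₀)·(α^{n-2}(x₁)·( ⋯ ·(α(x_{n-2})·(x_{n-1}·xₙ))⋯)). -/
noncomputable def Lnest {K V : Type*} [Field K] [AddCommGroup V] [Module K V]
    (mul : V →ₗ[K] V →ₗ[K] V) (α : V →ₗ[K] V) : ℕ → (ℕ → V) → V
  | 0, x => x 0
  | n + 1, x => mul ((α ^ n) (x 0)) (Lnest mul α n (fun i => x (i + 1)))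

/-- Right-nested product: `Rnest mul α n x` is
((⋯((x₀·x₁)·α(x₂))⋯·α^{n-2}(x_{n-1}))·α^{n-1}(xₙ). -/
noncomputable def Rnest {K V : Type*} [Field K] [AddCommGroup V] [Module K V]
    (mul : V →ₗ[K] V →ₗ[K] V) (α : V →ₗ[K] V) : ℕ → (ℕ → V) → V
  | 0, x => x 0
  | n + 1, x => mul (Rnest mul α n x) ((α ^ n) (x (n + 1)))

section HomAssociative

variable {K V : Type*} [Field K] [AddCommGroup V] [Module K V]
  (mul : V →ₗ[K] V →ₗ[K] V) (α : V →ₗ[K] V)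

theorem Rnest_succ_eq_mul_Rnest_tail
    (hassoc : ∀ x y z : V, mul (α x) (mul y z) = mul (mul x y) (α z)) (n : ℕ) (x : ℕ → V) :
    Rnest mul α (n + 1) x = mul ((α ^ n) (x 0)) (Rnest mul α n (fun i => x (i + 1))) := by
  induction n generalizing x with
  | zero => rfl
  | succ n ih =>
    calc Rnest mul α (n + 2) x
        = mul (mul ((α ^ n) (x 0)) (Rnest mul α n (fun i => x (i + 1))))
            (α ((α ^ n) (x (n + 2)))) := by
          rw [Rnest, ih, pow_succ', Module.End.mul_apply]
      _ = mul ((α ^ (n + 1)) (x 0)) (Rnest mul α (n + 1) (fun i => x (i + 1))) := by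
          rw [← hassoc, pow_succ', Module.End.mul_apply, Rnest]

theorem Lnest_eq_Rnest
    (hassoc : ∀ x y z : V, mul (α x) (mul y z) = mul (mul x y) (α z)) (n : ℕ) (x : ℕ → V) :
    Lnest mul α n x = Rnest mul α n x := by
  induction n generalizing x with
  | zero => rfl
  | succ n ih => rw [Lnest, ih, Rnest_succ_eq_mul_Rnest_tail mul α hassoc]

end HomAssociative

/-- in a Hom-associative algebra, the left-nested and right-nested
products of n+1 factors (with the appropriate twists) coincide for all n ≥ 2. -/
theorem stmt3 {K V : Type*} [Field K] [AddCommGroup V] [Module K V]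
    (mul : V →ₗ[K] V →ₗ[K] V) (α : V →ₗ[K] V)
    (hassoc : ∀ x y z : V, mul (α x) (mul y z) = mul (mul x y) (α z)) :
    ∀ n : ℕ, 2 ≤ n → ∀ x : ℕ → V, Lnest mul α n x = Rnest mul α n x :=
  fun n _ x => Lnest_eq_Rnest mul α hassoc n x
end

section
/- Let V be a vector space over a field K, let Δ : V → V ⊗ V be a coassociative comultiplication, i.e. (Δ ⊗ id) ∘ Δ = (id ⊗ Δ) ∘ Δ, and let β : V → V be a K-linear coalgebra endomorphism, i.e. (β ⊗ β) ∘ Δ = Δ ∘ β. Then Δ_β := Δ ∘ β is Hom-coassociative with respect to β: (β ⊗ Δ_β) ∘ Δ_β = (Δ_β ⊗ β) ∘ Δ_β, so (V, Δ_β, β) is a Hom-coassociative coalgebra. -/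
open TensorProduct

/-!
Write `Δ ∘ β` for the twisted comultiplication. On either side of its Hom-coassociativity
identity, the `β` applied to one tensor factor and the `β` inside `Δ ∘ β` on the other combine
into `β ⊗ β`, which passes through `Δ` because β is a coalgebra map. Both sides thus become the
two sides of ordinary coassociativity precomposed with `β ∘ β`.
-/

section

variable {R V : Type*} [CommSemiring R] [AddCommMonoid V] [Module R V]
  {Δ : V →ₗ[R] V ⊗[R] V} {β : V →ₗ[R] V}

theorem map_self_twistedComul_comp_twistedComul (hβ : map β β ∘ₗ Δ = Δ ∘ₗ β) :
    map β (Δ ∘ₗ β) ∘ₗ (Δ ∘ₗ β) = map LinearMap.id Δ ∘ₗ Δ ∘ₗ β ∘ₗ β := by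
  calc map β (Δ ∘ₗ β) ∘ₗ (Δ ∘ₗ β)
      = map LinearMap.id Δ ∘ₗ (map β β ∘ₗ Δ) ∘ₗ β := by
        rw [← LinearMap.id_comp β, map_comp, LinearMap.id_comp]; rfl
    _ = map LinearMap.id Δ ∘ₗ Δ ∘ₗ β ∘ₗ β := by rw [hβ]; rfl

theorem map_twistedComul_self_comp_twistedComul (hβ : map β β ∘ₗ Δ = Δ ∘ₗ β) :
    map (Δ ∘ₗ β) β ∘ₗ (Δ ∘ₗ β) = map Δ LinearMap.id ∘ₗ Δ ∘ₗ β ∘ₗ β := by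
  calc map (Δ ∘ₗ β) β ∘ₗ (Δ ∘ₗ β)
      = map Δ LinearMap.id ∘ₗ (map β β ∘ₗ Δ) ∘ₗ β := by
        rw [← LinearMap.id_comp β, map_comp, LinearMap.id_comp]; rfl
    _ = map Δ LinearMap.id ∘ₗ Δ ∘ₗ β ∘ₗ β := by rw [hβ]; rfl

end

/-- if Δ is a coassociative comultiplication on V and β is a coalgebra
endomorphism, then Δ_β := Δ ∘ β is Hom-coassociative with respect to β. -/
theorem stmt5 {K V : Type*} [Field K] [AddCommGroup V] [Module K V]
    (Δ : V →ₗ[K] V ⊗[K] V) (β : V →ₗ[K] V)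
    (hco : TensorProduct.map LinearMap.id Δ ∘ₗ Δ =
      (TensorProduct.assoc K V V V).toLinearMap ∘ₗ TensorProduct.map Δ LinearMap.id ∘ₗ Δ)
    (hβ : TensorProduct.map β β ∘ₗ Δ = Δ ∘ₗ β) :
    TensorProduct.map β (Δ ∘ₗ β) ∘ₗ (Δ ∘ₗ β) =
      (TensorProduct.assoc K V V V).toLinearMap ∘ₗ TensorProduct.map (Δ ∘ₗ β) β ∘ₗ (Δ ∘ₗ β) := by
  rw [map_self_twistedComul_comp_twistedComul hβ, map_twistedComul_self_comp_twistedComul hβ,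
    ← LinearMap.comp_assoc, hco]
  rfl
end

section
/- Let V be a vector space over a field K equipped with K-linear maps μ : V ⊗ V → V and α : V → V satisfying Hom-associativity μ ∘ (α ⊗ μ) = μ ∘ (μ ⊗ α) as maps V ⊗ V ⊗ V → V, and K-linear maps Δ : V → V ⊗ V and β : V → V satisfying Hom-coassociativity (β ⊗ Δ) ∘ Δ = (Δ ⊗ β) ∘ Δ. For f, g ∈ End_K(V) define the convolution product f ⋆ g := μ ∘ (f ⊗ g) ∘ Δ, and define γ(f) := α ∘ f ∘ β. Then for all f, g, h ∈ End_K(V): γ(f) ⋆ (g ⋆ h) = (f ⋆ g) ⋆ γ(h); i.e. the convolution product on End_K(V) is Hom-associative with twisting map γ. -/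
open TensorProduct

noncomputable def convProd {K V : Type*} [Field K] [AddCommGroup V] [Module K V]
    (μ : V ⊗[K] V →ₗ[K] V) (Δ : V →ₗ[K] V ⊗[K] V)
    (f g : V →ₗ[K] V) : V →ₗ[K] V :=
  μ ∘ₗ TensorProduct.map f g ∘ₗ Δ

open LinearMap

/-- for a Hom-associative multiplication μ (twisted by α) and a
Hom-coassociative comultiplication Δ (twisted by β), the convolution product on
End_K(V) is Hom-associative with twisting map γ(f) = α ∘ f ∘ β. -/
theorem stmt6 {K V : Type*} [Field K] [AddCommGroup V] [Module K V]
    (μ : V ⊗[K] V →ₗ[K] V) (α : V →ₗ[K] V)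
    (Δ : V →ₗ[K] V ⊗[K] V) (β : V →ₗ[K] V)
    (hassoc : μ ∘ₗ TensorProduct.map α μ ∘ₗ (TensorProduct.assoc K V V V).toLinearMap
      = μ ∘ₗ TensorProduct.map μ α)
    (hcoassoc : TensorProduct.map β Δ ∘ₗ Δ
      = (TensorProduct.assoc K V V V).toLinearMap ∘ₗ TensorProduct.map Δ β ∘ₗ Δ)
    (f g h : V →ₗ[K] V) :
    convProd μ Δ (α ∘ₗ f ∘ₗ β) (convProd μ Δ g h)
      = convProd μ Δ (convProd μ Δ f g) (α ∘ₗ h ∘ₗ β) := by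
  let a := (TensorProduct.assoc K V V V).toLinearMap
  calc convProd μ Δ (α ∘ₗ f ∘ₗ β) (convProd μ Δ g h)
      = μ ∘ₗ map α μ ∘ₗ map f (map g h) ∘ₗ (map β Δ ∘ₗ Δ) := by
        simp only [convProd, map_comp, comp_assoc]
    _ = μ ∘ₗ map α μ ∘ₗ (map f (map g h) ∘ₗ a) ∘ₗ map Δ β ∘ₗ Δ := by
        rw [hcoassoc]; simp only [comp_assoc, a]
    _ = (μ ∘ₗ map α μ ∘ₗ a) ∘ₗ map (map f g) h ∘ₗ map Δ β ∘ₗ Δ := by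
        rw [map_map_comp_assoc_eq]; simp only [comp_assoc, a]
    _ = convProd μ Δ (convProd μ Δ f g) (α ∘ₗ h ∘ₗ β) := by
        rw [hassoc]; simp only [convProd, map_comp, comp_assoc]
end

section
/- Let V be a vector space over a field K with K-linear maps μ : V ⊗ V → V, Δ : V → V ⊗ V and α : V → V. Assume the generalized-bialgebra compatibility Δ ∘ μ = (μ ⊗ μ) ∘ Υ ∘ (Δ ⊗ Δ) as maps V ⊗ V → V ⊗ V, where Υ : V⊗V⊗V⊗V → V⊗V⊗V⊗V is the map x₁ ⊗ x₂ ⊗ x₃ ⊗ x₄ ↦ x₁ ⊗ x₃ ⊗ x₂ ⊗ x₄, and assume α is both an algebra endomorphism, α ∘ μ = μ ∘ (α ⊗ α), and a coalgebra endomorphism, Δ ∘ α = (α ⊗ α) ∘ Δ. Then μ_α := α ∘ μ and Δ_α := Δ ∘ α satisfy the same compatibility: Δ_α ∘ μ_α = (μ_α ⊗ μ_α) ∘ Υ ∘ (Δ_α ⊗ Δ_α). -/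
open TensorProduct

theorem TensorProduct.twist_bialgebra_compat {R A : Type*} [CommSemiring R] [AddCommMonoid A]
    [Module R A] {μ : A ⊗[R] A →ₗ[R] A} {Δ : A →ₗ[R] A ⊗[R] A} {α : A →ₗ[R] A}
    (hcompat : Δ ∘ₗ μ = map μ μ ∘ₗ (tensorTensorTensorComm R A A A A).toLinearMap ∘ₗ map Δ Δ)
    (halg : α ∘ₗ μ = μ ∘ₗ map α α) (hcoalg : Δ ∘ₗ α = map α α ∘ₗ Δ) :
    (Δ ∘ₗ α) ∘ₗ (α ∘ₗ μ) = map (α ∘ₗ μ) (α ∘ₗ μ)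
      ∘ₗ (tensorTensorTensorComm R A A A A).toLinearMap ∘ₗ map (Δ ∘ₗ α) (Δ ∘ₗ α) := by
  have hμ : map μ μ ∘ₗ map (map α α) (map α α) = map α α ∘ₗ map μ μ := by
    rw [← map_comp, ← halg, map_comp]
  calc (Δ ∘ₗ α) ∘ₗ (α ∘ₗ μ) = map α α ∘ₗ map α α ∘ₗ Δ ∘ₗ μ := by
        rw [hcoalg, LinearMap.comp_assoc, ← LinearMap.comp_assoc μ α Δ, hcoalg,
          LinearMap.comp_assoc]
    _ = map α α ∘ₗ (map μ μ ∘ₗ map (map α α) (map α α))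
          ∘ₗ (tensorTensorTensorComm R A A A A).toLinearMap ∘ₗ map Δ Δ := by
        rw [hcompat, hμ, LinearMap.comp_assoc]
    _ = map α α ∘ₗ map μ μ ∘ₗ (tensorTensorTensorComm R A A A A).toLinearMap
          ∘ₗ map (map α α) (map α α) ∘ₗ map Δ Δ := by
        rw [LinearMap.comp_assoc, ← LinearMap.comp_assoc (map Δ Δ) (map (map α α) (map α α)),
          tensorTensorTensorComm_comp_map, LinearMap.comp_assoc]
    _ = map (α ∘ₗ μ) (α ∘ₗ μ) ∘ₗ (tensorTensorTensorComm R A A A A).toLinearMap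
          ∘ₗ map (Δ ∘ₗ α) (Δ ∘ₗ α) := by
        rw [map_comp, hcoalg, map_comp, LinearMap.comp_assoc]

/-- if (V, μ, Δ) satisfies the generalized-bialgebra compatibility
Δ ∘ μ = (μ ⊗ μ) ∘ Υ ∘ (Δ ⊗ Δ), and α is both an algebra and a coalgebra
endomorphism, then μ_α := α ∘ μ and Δ_α := Δ ∘ α satisfy the same compatibility.
Here Υ(x₁ ⊗ x₂ ⊗ x₃ ⊗ x₄) = x₁ ⊗ x₃ ⊗ x₂ ⊗ x₄ is `tensorTensorTensorComm`. -/
theorem stmt13 {K V : Type*} [Field K] [AddCommGroup V] [Module K V]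
    (μ : V ⊗[K] V →ₗ[K] V) (Δ : V →ₗ[K] V ⊗[K] V) (α : V →ₗ[K] V)
    (hcompat : Δ ∘ₗ μ
      = TensorProduct.map μ μ
          ∘ₗ (TensorProduct.tensorTensorTensorComm K V V V V).toLinearMap
          ∘ₗ TensorProduct.map Δ Δ)
    (halg : α ∘ₗ μ = μ ∘ₗ TensorProduct.map α α)
    (hcoalg : Δ ∘ₗ α = TensorProduct.map α α ∘ₗ Δ) :
    (Δ ∘ₗ α) ∘ₗ (α ∘ₗ μ)
      = TensorProduct.map (α ∘ₗ μ) (α ∘ₗ μ)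
          ∘ₗ (TensorProduct.tensorTensorTensorComm K V V V V).toLinearMap
          ∘ₗ TensorProduct.map (Δ ∘ₗ α) (Δ ∘ₗ α) := by
  exact twist_bialgebra_compat hcompat halg hcoalg
end
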